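/- arXiv:2007.12859 — 5 statements merged into one kernel-verified Lean document; each statement's English description precedes it below -/
import Mathlib

section
/- With H as in the previous setup, E[|H|²] = φ_1² a⁴ + (1/n)(1 − φ_1² a⁴). Consequently, the average SNR of the legitimate link, γ̄_b = n² γ_{0,b} E[|H|²] = n² γ_{0,b}[φ_1² a⁴ + (1 − φ_1² a⁴)/n], scales as n² when φ_1 a² > 0. -/
open MeasureTheory Real Set ProbabilityTheory Filter

/-!
Write `H = n⁻¹ ∑ Zᵢ` with `Zᵢ = Bᵢ e^{jΘᵢ}`. Splitting `|·|²` into the squares of the real and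
imaginary parts and using that the variance of a sum of independent variables is the sum of the
variances gives `E|∑ Zᵢ|² = ∑ (E|Zᵢ|² - |E Zᵢ|²) + |∑ E Zᵢ|²`. Here `E|Zᵢ|² = E Bᵢ² = 1` and, as
`Bᵢ` is independent of `Θᵢ`, `E Zᵢ = E Bᵢ · E e^{jΘᵢ} = a² φ₁`; hence
`E|∑ Zᵢ|² = n (1 - φ₁² a⁴) + n² φ₁² a⁴`.
-/

section SecondMoment

variable {Ω ι : Type*} [MeasurableSpace Ω] {μ : Measure Ω} [IsProbabilityMeasure μ]
  {s : Finset ι}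

theorem integral_sq_finsetSum_of_pairwise_indepFun {X : ι → Ω → ℝ}
    (hX : ∀ i ∈ s, MemLp (X i) 2 μ) (hindep : Set.Pairwise s fun i j => X i ⟂ᵢ[μ] X j) :
    ∫ ω, (∑ i ∈ s, X i ω) ^ 2 ∂μ = ∑ i ∈ s, Var[X i; μ] + (∑ i ∈ s, ∫ ω, X i ω ∂μ) ^ 2 := by
  have hvar := variance_eq_sub (memLp_finsetSum' s hX)
  rw [IndepFun.variance_sum hX hindep] at hvar
  simp only [Pi.pow_apply, Finset.sum_apply] at hvar
  rw [hvar, integral_finsetSum s fun i hi => (hX i hi).integrable one_le_two]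
  ring

omit [IsProbabilityMeasure μ] in
theorem integral_norm_sq_eq_re_add_im {Z : Ω → ℂ} (hZ : MemLp Z 2 μ) :
    ∫ ω, ‖Z ω‖ ^ 2 ∂μ = ∫ ω, (Z ω).re ^ 2 ∂μ + ∫ ω, (Z ω).im ^ 2 ∂μ := by
  simp_rw [Complex.sq_norm, Complex.normSq_apply, ← sq]
  exact integral_add hZ.re.integrable_sq hZ.im.integrable_sq

theorem integral_norm_sq_sub_norm_integral_sq {Z : Ω → ℂ} (hZ : MemLp Z 2 μ) :
    ∫ ω, ‖Z ω‖ ^ 2 ∂μ - ‖∫ ω, Z ω ∂μ‖ ^ 2 =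
      Var[fun ω => (Z ω).re; μ] + Var[fun ω => (Z ω).im; μ] := by
  have hre : MemLp (fun ω => (Z ω).re) 2 μ := hZ.re
  have him : MemLp (fun ω => (Z ω).im) 2 μ := hZ.im
  have hZint := hZ.integrable one_le_two
  have hint_re : ∫ ω, (Z ω).re ∂μ = (∫ ω, Z ω ∂μ).re := integral_re hZint
  have hint_im : ∫ ω, (Z ω).im ∂μ = (∫ ω, Z ω ∂μ).im := integral_im hZint
  rw [integral_norm_sq_eq_re_add_im hZ, variance_eq_sub hre, variance_eq_sub him, hint_re,
    hint_im, Complex.sq_norm, Complex.normSq_apply]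
  simp only [Pi.pow_apply]
  ring

theorem integral_norm_sq_finsetSum_of_pairwise_indepFun {Z : ι → Ω → ℂ}
    (hZ : ∀ i ∈ s, MemLp (Z i) 2 μ) (hindep : Set.Pairwise s fun i j => Z i ⟂ᵢ[μ] Z j) :
    ∫ ω, ‖∑ i ∈ s, Z i ω‖ ^ 2 ∂μ =
      ∑ i ∈ s, (∫ ω, ‖Z i ω‖ ^ 2 ∂μ - ‖∫ ω, Z i ω ∂μ‖ ^ 2) + ‖∑ i ∈ s, ∫ ω, Z i ω ∂μ‖ ^ 2 := by
  rw [integral_norm_sq_eq_re_add_im (memLp_finsetSum s hZ)]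
  simp only [Complex.re_sum, Complex.im_sum]
  rw [integral_sq_finsetSum_of_pairwise_indepFun (X := fun i ω => (Z i ω).re)
      (fun i hi => (hZ i hi).re)
      (hindep.mono' fun i j h => h.comp Complex.measurable_re Complex.measurable_re),
    integral_sq_finsetSum_of_pairwise_indepFun (X := fun i ω => (Z i ω).im)
      (fun i hi => (hZ i hi).im)
      (hindep.mono' fun i j h => h.comp Complex.measurable_im Complex.measurable_im),
    Finset.sum_congr rfl fun i hi => integral_norm_sq_sub_norm_integral_sq (hZ i hi),
    Complex.sq_norm, Complex.normSq_apply, Complex.re_sum, Complex.im_sum, Finset.sum_add_distrib]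
  have hint : ∀ i ∈ s, Integrable (Z i) μ := fun i hi => (hZ i hi).integrable one_le_two
  have hre : ∀ i ∈ s, ∫ ω, (Z i ω).re ∂μ = (∫ ω, Z i ω ∂μ).re :=
    fun i hi => integral_re (hint i hi)
  have him : ∀ i ∈ s, ∫ ω, (Z i ω).im ∂μ = (∫ ω, Z i ω ∂μ).im :=
    fun i hi => integral_im (hint i hi)
  rw [Finset.sum_congr rfl hre, Finset.sum_congr rfl him]
  ring

theorem integral_norm_sq_finsetSum_of_identical_moments {Z : ι → Ω → ℂ} {σ : ℝ} {m : ℂ}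
    (hZ : ∀ i ∈ s, MemLp (Z i) 2 μ) (hindep : Set.Pairwise s fun i j => Z i ⟂ᵢ[μ] Z j)
    (hσ : ∀ i ∈ s, ∫ ω, ‖Z i ω‖ ^ 2 ∂μ = σ) (hm : ∀ i ∈ s, ∫ ω, Z i ω ∂μ = m) :
    ∫ ω, ‖∑ i ∈ s, Z i ω‖ ^ 2 ∂μ = s.card * (σ - ‖m‖ ^ 2) + s.card ^ 2 * ‖m‖ ^ 2 := by
  rw [integral_norm_sq_finsetSum_of_pairwise_indepFun hZ hindep,
    Finset.sum_congr rfl fun i hi => by rw [hσ i hi, hm i hi], Finset.sum_congr rfl hm]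
  simp [mul_pow, mul_sub]

end SecondMoment

section Phasor

variable {Ω : Type*} [MeasurableSpace Ω] {μ : Measure Ω} {b θ : Ω → ℝ}

theorem norm_ofReal_mul_exp_I_mul (x y : ℝ) : ‖(x : ℂ) * Complex.exp (Complex.I * y)‖ = |x| := by
  rw [norm_mul, mul_comm Complex.I, Complex.norm_exp_ofReal_mul_I, Complex.norm_real, mul_one,
    Real.norm_eq_abs]

theorem memLp_ofReal_mul_exp_I_mul {p : ENNReal} (hb : MemLp b p μ) (hθ : Measurable θ) :
    MemLp (fun ω => (b ω : ℂ) * Complex.exp (Complex.I * θ ω)) p μ :=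
  hb.of_le (hb.ofReal.1.mul (by fun_prop)) <| .of_forall fun ω => by
    rw [norm_ofReal_mul_exp_I_mul, Real.norm_eq_abs]

theorem integral_exp_I_mul [IsFiniteMeasure μ] (hθ : Measurable θ) :
    ∫ ω, Complex.exp (Complex.I * θ ω) ∂μ =
      ∫ ω, Real.cos (θ ω) ∂μ + (∫ ω, Real.sin (θ ω) ∂μ) * Complex.I := by
  have hint : Integrable (fun ω => Complex.exp (Complex.I * θ ω)) μ :=
    .of_bound (by fun_prop) 1 <| .of_forall fun ω => by
      rw [mul_comm, Complex.norm_exp_ofReal_mul_I]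
  have hre : ∫ ω, (Complex.exp (Complex.I * θ ω)).re ∂μ = _ := integral_re hint
  have him : ∫ ω, (Complex.exp (Complex.I * θ ω)).im ∂μ = _ := integral_im hint
  simp only [Complex.exp_re, Complex.exp_im, Complex.mul_re, Complex.mul_im, Complex.I_re,
    Complex.I_im, Complex.ofReal_re, Complex.ofReal_im, zero_mul, mul_zero, one_mul, sub_zero,
    zero_add, Real.exp_zero] at hre him
  apply Complex.ext <;> simp [hre, him]

theorem integral_ofReal_mul_exp_I_mul (hbθ : b ⟂ᵢ[μ] θ) (hb : Measurable b) (hθ : Measurable θ) :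
    ∫ ω, (b ω : ℂ) * Complex.exp (Complex.I * θ ω) ∂μ =
      (∫ ω, b ω ∂μ : ℝ) * ∫ ω, Complex.exp (Complex.I * θ ω) ∂μ := by
  have h := (hbθ.comp (φ := ((↑) : ℝ → ℂ)) (ψ := fun y : ℝ => Complex.exp (Complex.I * y))
      Complex.measurable_ofReal (by fun_prop)).integral_mul_eq_mul_integral
        (by fun_prop) (by fun_prop)
  simpa only [Pi.mul_apply, Function.comp_apply, integral_complex_ofReal] using h

end Phasor

theorem tendsto_sq_mul_mul_add_div_div_sq (γ c d : ℝ) :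
    Tendsto (fun m : ℕ => ((m : ℝ) ^ 2 * γ * (c + d / m)) / (m : ℝ) ^ 2) atTop (nhds (γ * c)) := by
  have hlim : Tendsto (fun m : ℕ => γ * c + γ * d / m) atTop (nhds (γ * c)) := by
    simpa using tendsto_const_nhds.add (tendsto_const_div_atTop_nhds_zero_nat (γ * d))
  refine hlim.congr' ?_
  filter_upwards [eventually_ne_atTop 0] with m hm
  field_simp

theorem legitimate_channel_power_scaling_general
    {Ω : Type*} [MeasurableSpace Ω] (μ : Measure Ω) [IsProbabilityMeasure μ]
    (n : ℕ) (hn : 0 < n) (B Θ : Fin n → Ω → ℝ) (a φ₁ γ₀b : ℝ)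
    (hB : ∀ i, Measurable (B i)) (hΘ : ∀ i, Measurable (Θ i))
    (hB2int : ∀ i, Integrable (fun ω => (B i ω) ^ 2) μ)
    (hBmean : ∀ i, ∫ ω, B i ω ∂μ = a ^ 2)
    (hB2 : ∀ i, ∫ ω, (B i ω) ^ 2 ∂μ = 1)
    (hφ₁ : ∀ i, ∫ ω, Real.cos (Θ i ω) ∂μ = φ₁)
    (hsin1 : ∀ i, ∫ ω, Real.sin (Θ i ω) ∂μ = 0)
    (hBΘindep : ∀ i, IndepFun (B i) (Θ i) μ)
    (hiid : iIndepFun (fun i ω => (B i ω, Θ i ω)) μ)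
    (H : Ω → ℂ)
    (hH : H = fun ω => (n : ℂ)⁻¹ * ∑ i, (B i ω : ℂ) *
      Complex.exp (Complex.I * (Θ i ω : ℂ))) :
    (∫ ω, ‖H ω‖ ^ 2 ∂μ = φ₁ ^ 2 * a ^ 4 + (1 - φ₁ ^ 2 * a ^ 4) / n) ∧
      (n : ℝ) ^ 2 * γ₀b * ∫ ω, ‖H ω‖ ^ 2 ∂μ =
        (n : ℝ) ^ 2 * γ₀b * (φ₁ ^ 2 * a ^ 4 + (1 - φ₁ ^ 2 * a ^ 4) / n) ∧
      Tendsto (fun m : ℕ =>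
          ((m : ℝ) ^ 2 * γ₀b * (φ₁ ^ 2 * a ^ 4 + (1 - φ₁ ^ 2 * a ^ 4) / m)) / (m : ℝ) ^ 2)
        atTop (nhds (γ₀b * (φ₁ ^ 2 * a ^ 4))) := by
  set Z : Fin n → Ω → ℂ := fun i ω => (B i ω : ℂ) * Complex.exp (Complex.I * Θ i ω)
  have hZ : ∀ i ∈ Finset.univ, MemLp (Z i) 2 μ := fun i _ =>
    memLp_ofReal_mul_exp_I_mul
      ((memLp_two_iff_integrable_sq (hB i).aestronglyMeasurable).2 (hB2int i)) (hΘ i)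
  have hphasor : Measurable fun p : ℝ × ℝ => (p.1 : ℂ) * Complex.exp (Complex.I * p.2) := by
    fun_prop
  have hindep : Set.Pairwise ↑(Finset.univ : Finset (Fin n)) fun i j => Z i ⟂ᵢ[μ] Z j :=
    fun i _ j _ hij => (hiid.indepFun hij).comp hphasor hphasor
  have hσ : ∀ i ∈ Finset.univ, ∫ ω, ‖Z i ω‖ ^ 2 ∂μ = 1 := fun i _ => by
    simp only [Z, norm_ofReal_mul_exp_I_mul, sq_abs, hB2]
  have hm : ∀ i ∈ Finset.univ, ∫ ω, Z i ω ∂μ = ((a ^ 2 * φ₁ : ℝ) : ℂ) := fun i _ => by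
    rw [integral_ofReal_mul_exp_I_mul (hBΘindep i) (hB i) (hΘ i), integral_exp_I_mul (hΘ i),
      hBmean, hφ₁, hsin1]
    simp
  have hnorm_H : ∀ ω, ‖H ω‖ ^ 2 = ((n : ℝ) ^ 2)⁻¹ * ‖∑ i, Z i ω‖ ^ 2 := fun ω => by
    simp [hH, Z, mul_pow]
  have hmoment : ∫ ω, ‖H ω‖ ^ 2 ∂μ = φ₁ ^ 2 * a ^ 4 + (1 - φ₁ ^ 2 * a ^ 4) / n := by
    simp_rw [hnorm_H]
    rw [integral_const_mul, integral_norm_sq_finsetSum_of_identical_moments hZ hindep hσ hm]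
    have hn' : (n : ℝ) ≠ 0 := Nat.cast_ne_zero.mpr hn.ne'
    simp only [Finset.card_univ, Fintype.card_fin, Complex.norm_real, Real.norm_eq_abs, sq_abs]
    field_simp
    ring
  exact ⟨hmoment, by rw [hmoment], tendsto_sq_mul_mul_add_div_div_sq _ _ _⟩

/-- Second moment of the equivalent legitimate channel: `E[|H|²] = φ₁²a⁴ + (1−φ₁²a⁴)/n`;
consequently the average legitimate SNR `γ̄_b = n² γ₀b E[|H|²]` equals
`n² γ₀b [φ₁²a⁴ + (1−φ₁²a⁴)/n]` and scales as `n²` (that is, `γ̄_b/n² → γ₀b φ₁²a⁴`)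
when `φ₁ a² > 0`. -/
theorem legitimate_channel_power_scaling
    {Ω : Type*} [MeasurableSpace Ω] (μ : Measure Ω) [IsProbabilityMeasure μ]
    (n : ℕ) (hn : 0 < n) (B Θ : Fin n → Ω → ℝ) (a φ₁ φ₂ γ₀b : ℝ)
    (hγ₀b : 0 < γ₀b) (hφa : 0 < φ₁ * a ^ 2)
    (hB : ∀ i, Measurable (B i)) (hΘ : ∀ i, Measurable (Θ i))
    (hBpos : ∀ i ω, 0 ≤ B i ω)
    (hBint : ∀ i, Integrable (B i) μ)
    (hB2int : ∀ i, Integrable (fun ω => (B i ω) ^ 2) μ)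
    (hBmean : ∀ i, ∫ ω, B i ω ∂μ = a ^ 2)
    (hB2 : ∀ i, ∫ ω, (B i ω) ^ 2 ∂μ = 1)
    (hφ₁ : ∀ i, ∫ ω, Real.cos (Θ i ω) ∂μ = φ₁)
    (hφ₂ : ∀ i, ∫ ω, Real.cos (2 * Θ i ω) ∂μ = φ₂)
    (hsin1 : ∀ i, ∫ ω, Real.sin (Θ i ω) ∂μ = 0)
    (hsin2 : ∀ i, ∫ ω, Real.sin (2 * Θ i ω) ∂μ = 0)
    (hBΘindep : ∀ i, IndepFun (B i) (Θ i) μ)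
    (hiid : iIndepFun (fun i ω => (B i ω, Θ i ω)) μ)
    (H : Ω → ℂ)
    (hH : H = fun ω => (n : ℂ)⁻¹ * ∑ i, (B i ω : ℂ) *
      Complex.exp (Complex.I * (Θ i ω : ℂ))) :
    (∫ ω, ‖H ω‖ ^ 2 ∂μ = φ₁ ^ 2 * a ^ 4 + (1 - φ₁ ^ 2 * a ^ 4) / n) ∧
      (n : ℝ) ^ 2 * γ₀b * ∫ ω, ‖H ω‖ ^ 2 ∂μ =
        (n : ℝ) ^ 2 * γ₀b * (φ₁ ^ 2 * a ^ 4 + (1 - φ₁ ^ 2 * a ^ 4) / n) ∧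
      Tendsto (fun m : ℕ =>
          ((m : ℝ) ^ 2 * γ₀b * (φ₁ ^ 2 * a ^ 4 + (1 - φ₁ ^ 2 * a ^ 4) / m)) / (m : ℝ) ^ 2)
        atTop (nhds (γ₀b * (φ₁ ^ 2 * a ^ 4))) :=
  legitimate_channel_power_scaling_general μ n hn B Θ a φ₁ γ₀b hB hΘ hB2int hBmean hB2 hφ₁ hsin1
    hBΘindep hiid H hH
end

section
/- Let γ_b ~ Gamma with shape m > 0 and mean γ̄_b (Nakagami-m legitimate link) and γ_e ~ Exponential with mean γ̄_e, independent, and τ = 2^{R_S} > 1. Then the secrecy outage probability equals γ̃(m, (τ−1)m/γ̄_b) + e^{(τ−1)/(τγ̄_e)} · Γ̃(m, (τ−1)(m/γ̄_b + 1/(τγ̄_e))) / (1 + γ̄_b/(m τ γ̄_e))^m, where γ̃ and Γ̃ denote the regularized lower and upper incomplete gamma functions. -/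
/-!
Since `logb 2` is increasing, on the almost sure event `γb, γe ≥ 0` the outage event is
`γb < τ γe + (τ - 1)`. Conditioning on `γb = x` and using the exponential tail of `γe`, its
probability is `∫ exp (-(λ/τ) (x - (τ - 1))⁺) dP_γb(x)` with `λ = 1/γ̄_e`. On `x ≤ τ - 1` the
integrand is `1`, giving the gamma CDF `γ̃(m, (τ - 1) m/γ̄_b)`. On `x > τ - 1` the factor
`exp (-(λ/τ) x)` tilts the `Gamma(m, m/γ̄_b)` law into `(m/γ̄_b / c)^m` times the `Gamma(m, c)`
law, `c = m/γ̄_b + λ/τ`, whose tail at `τ - 1` is `Γ̃(m, c (τ - 1))`.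
-/

open MeasureTheory Real Set ProbabilityTheory

/-- Regularized lower incomplete gamma function `γ̃(s, x) = γ(s,x)/Γ(s)`. -/
noncomputable def regLowerIncGamma (s x : ℝ) : ℝ :=
  (∫ t in (0)..x, t ^ (s - 1) * Real.exp (-t)) / Real.Gamma s

/-- Regularized upper incomplete gamma function `Γ̃(s, x) = Γ(s,x)/Γ(s)`. -/
noncomputable def regUpperIncGamma (s x : ℝ) : ℝ :=
  (∫ t in Ioi x, t ^ (s - 1) * Real.exp (-t)) / Real.Gamma s

lemma Real.logb_one_add_sub_lt_iff {b x y R : ℝ} (hb : 1 < b) (hx : -1 < x) (hy : -1 < y) :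
    logb b (1 + x) - logb b (1 + y) < R ↔ x < b ^ R * y + (b ^ R - 1) := by
  have hy' : 0 < 1 + y := by linarith
  have hR : R + logb b (1 + y) = logb b (b ^ R * (1 + y)) := by
    rw [logb_mul (by positivity) hy'.ne', logb_rpow (by linarith) hb.ne']
  rw [sub_lt_iff_lt_add, hR, logb_lt_logb_iff hb (by linarith) (by positivity)]
  constructor <;> intro h <;> linarith

lemma expMeasure_Ioi {r : ℝ} (hr : 0 < r) (t : ℝ) :
    expMeasure r (Ioi t) = ENNReal.ofReal (exp (-(r * max t 0))) := by
  have := isProbabilityMeasure_expMeasure hr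
  rw [← compl_Iic, prob_compl_eq_one_sub measurableSet_Iic, ← ofReal_measureReal,
    ← cdf_eq_real, ← ENNReal.ofReal_one, ← ENNReal.ofReal_sub _ (cdf_nonneg _ _),
    cdf_expMeasure_eq hr]
  congr 1
  split_ifs with ht
  · simp [max_eq_left ht]
  · simp [max_eq_right (not_le.mp ht).le]

lemma prod_expMeasure_lt_mul_add (ν : Measure ℝ) {r τ : ℝ} (hr : 0 < r) (hτ : 0 < τ) (a : ℝ) :
    (ν.prod (expMeasure r)) {p | p.1 < τ * p.2 + a} =
      ∫⁻ x, ENNReal.ofReal (exp (-(r / τ * max (x - a) 0))) ∂ν := by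
  have := isProbabilityMeasure_expMeasure hr
  rw [Measure.prod_apply (measurableSet_lt measurable_fst (by fun_prop))]
  refine lintegral_congr fun x => ?_
  have hsection : Prod.mk x ⁻¹' {p : ℝ × ℝ | p.1 < τ * p.2 + a} = Ioi ((x - a) / τ) := by
    ext y
    rw [mem_preimage, mem_ofPred_eq, mem_Ioi, div_lt_iff₀ hτ]
    constructor <;> intro h <;> linarith
  have hmax : max ((x - a) / τ) 0 = max (x - a) 0 / τ := by
    rw [← max_div_div_right hτ.le, zero_div]
  rw [hsection, expMeasure_Ioi hr, hmax, mul_div_assoc', div_mul_eq_mul_div]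

lemma ae_nonneg_gammaMeasure (a r : ℝ) : ∀ᵐ x ∂gammaMeasure a r, 0 ≤ x := by
  rw [ae_iff]
  simp only [not_le]
  rw [Iio_def, gammaMeasure, withDensity_apply _ measurableSet_Iio,
    lintegral_gammaPDF_of_nonpos le_rfl]

lemma gammaPDFReal_of_nonneg {a r x : ℝ} (hr : 0 < r) (hx : 0 ≤ x) :
    gammaPDFReal a r x = r * ((r * x) ^ (a - 1) * exp (-(r * x))) / Gamma a := by
  rw [gammaPDFReal, if_pos hx, mul_rpow hr.le hx, rpow_sub_one hr.ne']
  field_simp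

lemma gammaMeasure_real_eq_setIntegral {a r : ℝ} (ha : 0 < a) (hr : 0 < r) (s : Set ℝ) :
    (gammaMeasure a r).real s = ∫ x in s, gammaPDFReal a r x := by
  rw [measureReal_def, gammaMeasure, withDensity_apply' _ s,
    integral_eq_lintegral_of_nonneg_ae (ae_of_all _ (gammaPDFReal_nonneg ha hr)) (by fun_prop)]
  rfl

lemma gammaMeasure_real_Ioi {a r x : ℝ} (ha : 0 < a) (hr : 0 < r) (hx : 0 ≤ x) :
    (gammaMeasure a r).real (Ioi x) = regUpperIncGamma a (r * x) := by
  rw [gammaMeasure_real_eq_setIntegral ha hr, setIntegral_congr_fun measurableSet_Ioi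
      (fun t ht => gammaPDFReal_of_nonneg hr (hx.trans (le_of_lt ht))),
    integral_div, integral_const_mul,
    integral_comp_mul_left_Ioi (fun u => u ^ (a - 1) * exp (-u)) x hr, smul_eq_mul,
    mul_inv_cancel_left₀ hr.ne', regUpperIncGamma]

lemma gammaMeasure_real_Iic {a r x : ℝ} (ha : 0 < a) (hr : 0 < r) (hx : 0 ≤ x) :
    (gammaMeasure a r).real (Iic x) = regLowerIncGamma a (r * x) := by
  have hsupp : gammaPDFReal a r = (Ici 0).indicator (gammaPDFReal a r) := by
    funext t
    by_cases ht : 0 ≤ t <;> simp [gammaPDFReal, ht]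
  rw [gammaMeasure_real_eq_setIntegral ha hr, hsupp, setIntegral_indicator measurableSet_Ici,
    Iic_inter_Ici, integral_Icc_eq_integral_Ioc, ← intervalIntegral.integral_of_le hx,
    intervalIntegral.integral_congr
      (fun t ht => gammaPDFReal_of_nonneg hr (uIcc_of_le hx ▸ ht).1),
    intervalIntegral.integral_div, intervalIntegral.integral_const_mul,
    intervalIntegral.integral_comp_mul_left (fun u => u ^ (a - 1) * exp (-u)) hr.ne', mul_zero,
    smul_eq_mul, mul_inv_cancel_left₀ hr.ne', regLowerIncGamma]

lemma withDensity_exp_neg_mul_gammaMeasure (a : ℝ) {r s : ℝ} (hr : 0 ≤ r) (hrs : 0 < r + s) :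
    (gammaMeasure a r).withDensity (fun x => ENNReal.ofReal (exp (-(s * x)))) =
      ENNReal.ofReal ((r / (r + s)) ^ a) • gammaMeasure a (r + s) := by
  have hpdf (b : ℝ) : Measurable (gammaPDF a b) := (measurable_gammaPDFReal a b).ennreal_ofReal
  rw [gammaMeasure, gammaMeasure, ← withDensity_mul _ (hpdf r) (by fun_prop),
    ← withDensity_smul _ (hpdf (r + s))]
  congr 1
  funext x
  rw [Pi.mul_apply, Pi.smul_apply, smul_eq_mul, gammaPDF, gammaPDF,
    ← ENNReal.ofReal_mul' (exp_nonneg _),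
    ← ENNReal.ofReal_mul (rpow_nonneg (div_nonneg hr hrs.le) a)]
  congr 1
  by_cases hx : 0 ≤ x
  · rw [gammaPDFReal, gammaPDFReal, if_pos hx, if_pos hx, div_rpow hr hrs.le]
    have : (r + s) ^ a ≠ 0 := (rpow_pos_of_pos hrs a).ne'
    field_simp
    rw [mul_assoc, ← exp_add]
    ring_nf
  · simp [gammaPDFReal, hx]

lemma lintegral_exp_neg_mul_max_gammaMeasure (a : ℝ) {r s : ℝ} (hr : 0 ≤ r) (hrs : 0 < r + s)
    (c : ℝ) :
    ∫⁻ x, ENNReal.ofReal (exp (-(s * max (x - c) 0))) ∂gammaMeasure a r =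
      gammaMeasure a r (Iic c) +
        ENNReal.ofReal (exp (s * c) * (r / (r + s)) ^ a) * gammaMeasure a (r + s) (Ioi c) := by
  rw [← lintegral_add_compl _ measurableSet_Iic, compl_Iic]
  congr 1
  · rw [← setLIntegral_one]
    refine setLIntegral_congr_fun measurableSet_Iic fun x (hx : x ≤ c) => ?_
    simp [max_eq_right (sub_nonpos.mpr hx)]
  · have htail : ∀ x ∈ Ioi c, ENNReal.ofReal (exp (-(s * max (x - c) 0))) =
        ENNReal.ofReal (exp (s * c)) * ENNReal.ofReal (exp (-(s * x))) := by
      intro x hx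
      rw [max_eq_left (sub_nonneg.mpr (le_of_lt hx)), ← ENNReal.ofReal_mul (exp_nonneg _),
        ← exp_add]
      ring_nf
    rw [setLIntegral_congr_fun measurableSet_Ioi htail, lintegral_const_mul _ (by fun_prop),
      ← withDensity_apply _ measurableSet_Ioi, withDensity_exp_neg_mul_gammaMeasure a hr hrs,
      Measure.smul_apply, smul_eq_mul, ← mul_assoc, ← ENNReal.ofReal_mul (exp_nonneg _)]

lemma ProbabilityTheory.IndepFun.measure_preimage_prodMk {Ω α β : Type*} [MeasurableSpace Ω] [MeasurableSpace α]
    [MeasurableSpace β] {μ : Measure Ω} [IsFiniteMeasure μ] {f : Ω → α} {g : Ω → β}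
    (hf : Measurable f) (hg : Measurable g) (hfg : IndepFun f g μ) {S : Set (α × β)}
    (hS : MeasurableSet S) :
    μ ((fun ω => (f ω, g ω)) ⁻¹' S) = ((μ.map f).prod (μ.map g)) S := by
  rw [← Measure.map_apply (hf.prodMk hg) hS,
    (indepFun_iff_map_prod_eq_prod_map_map hf.aemeasurable hg.aemeasurable).mp hfg]

/-- Closed-form secrecy outage probability for a Nakagami-`m` (gamma) legitimate link and
a Rayleigh (exponential) eavesdropper link. -/
theorem secrecy_outage_gamma_exponential
    {Ω : Type*} [MeasurableSpace Ω] (μ : Measure Ω) [IsProbabilityMeasure μ]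
    (γb γe : Ω → ℝ) (m gbar gebar Rs τ : ℝ)
    (hm : 0 < m) (hgbar : 0 < gbar) (hgebar : 0 < gebar) (hRs : 0 < Rs)
    (hτ : τ = (2 : ℝ) ^ Rs)
    (hγb : Measurable γb) (hγe : Measurable γe)
    (hγbdist : μ.map γb = gammaMeasure m (m / gbar))
    (hγedist : μ.map γe = expMeasure (1 / gebar))
    (hindep : IndepFun γb γe μ) :
    (μ {ω | Real.logb 2 (1 + γb ω) - Real.logb 2 (1 + γe ω) < Rs}).toReal =
      regLowerIncGamma m ((τ - 1) * m / gbar) +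
        Real.exp ((τ - 1) / (τ * gebar)) *
          regUpperIncGamma m ((τ - 1) * (m / gbar + 1 / (τ * gebar))) /
          (1 + gbar / (m * τ * gebar)) ^ m := by
  have hτ1 : 1 ≤ τ := hτ ▸ one_le_rpow one_le_two hRs.le
  have hlb : 0 < m / gbar := by positivity
  have hc : 0 < m / gbar + 1 / gebar / τ := by positivity
  have := isProbabilityMeasure_gammaMeasure hm hlb
  have := isProbabilityMeasure_gammaMeasure hm hc
  have hevent : {ω | logb 2 (1 + γb ω) - logb 2 (1 + γe ω) < Rs} =ᵐ[μ]
      (fun ω => (γb ω, γe ω)) ⁻¹' {p : ℝ × ℝ | p.1 < τ * p.2 + (τ - 1)} := by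
    have hb := ae_of_ae_map hγb.aemeasurable (hγbdist ▸ ae_nonneg_gammaMeasure _ _)
    have he := ae_of_ae_map hγe.aemeasurable
      (by rw [hγedist]; exact ae_nonneg_gammaMeasure 1 _)
    filter_upwards [hb, he] with ω hbω heω
    rw [hτ]
    exact propext (logb_one_add_sub_lt_iff one_lt_two (by linarith) (by linarith))
  rw [measure_congr hevent, hindep.measure_preimage_prodMk hγb hγe
      (measurableSet_lt measurable_fst (by fun_prop)), hγbdist, hγedist,
    prod_expMeasure_lt_mul_add _ (by positivity) (by positivity),
    lintegral_exp_neg_mul_max_gammaMeasure m hlb.le hc,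
    ENNReal.toReal_add (measure_ne_top _ _)
      (ENNReal.mul_ne_top ENNReal.ofReal_ne_top (measure_ne_top _ _)),
    ENNReal.toReal_mul, ENNReal.toReal_ofReal (by positivity), ← measureReal_def,
    ← measureReal_def, gammaMeasure_real_Iic hm hlb (by linarith),
    gammaMeasure_real_Ioi hm hc (by linarith)]
  have hratio : (m / gbar / (m / gbar + 1 / gebar / τ)) ^ m =
      ((1 + gbar / (m * τ * gebar)) ^ m)⁻¹ := by
    rw [← inv_rpow (by positivity)]
    congr 1
    field_simp
  rw [hratio, show m / gbar * (τ - 1) = (τ - 1) * m / gbar by ring,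
    show (m / gbar + 1 / gebar / τ) * (τ - 1) = (τ - 1) * (m / gbar + 1 / (τ * gebar)) by ring,
    show 1 / gebar / τ * (τ - 1) = (τ - 1) / (τ * gebar) by ring]
  ring
end

section
/- Let γ_b and γ_e be independent nonnegative random variables with CDFs F_b, F_e, with γ_e ~ Exponential(mean γ̄_e). Then the average secrecy capacity E[max{log₂(1+γ_b) − log₂(1+γ_e), 0}] equals E[log₂(1+γ_b)] − (1/ln 2) ∫₀^∞ (1 − F_e(x))(1 − F_b(x))/(1+x) dx, and the integral term L(γ̄_b, γ̄_e) = (1/ln 2) ∫₀^∞ (1 − F_e(x))(1 − F_b(x))/(1+x) dx is nonnegative. -/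
/-!
Since `t ↦ log₂ (1 + t)` is increasing on `[0, ∞)`,
`max (log₂ (1 + γ_b) - log₂ (1 + γ_e)) 0 = log₂ (1 + γ_b) - log₂ (1 + min γ_b γ_e)`.
The layer-cake formula with weight `(1 + t)⁻¹` gives
`E[ln (1 + Z)] = ∫₀^∞ P(Z > x) / (1 + x) dx` for any nonnegative `Z`, and for
`Z = min γ_b γ_e` independence factors the tail as `P(Z > x) = (1 - F_b x) (1 - F_e x)`.
-/

open MeasureTheory Real Set ProbabilityTheory

theorem integral_inv_one_add {x : ℝ} (hx : 0 ≤ x) :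
    ∫ t in (0 : ℝ)..x, (1 + t)⁻¹ = log (1 + x) := by
  rw [intervalIntegral.integral_comp_add_left (fun u : ℝ => u⁻¹) 1,
    integral_inv (by rw [uIcc_of_le (by linarith)]; intro h0; linarith [h0.1]), add_zero, div_one]

theorem MonotoneOn.max_sub_zero_eq_sub_map_min {α β : Type*} [LinearOrder α] [AddCommGroup β]
    [LinearOrder β] [IsOrderedAddMonoid β] {s : Set α} {f : α → β} (hf : MonotoneOn f s)
    {x y : α} (hx : x ∈ s) (hy : y ∈ s) :
    max (f x - f y) 0 = f x - f (min x y) := by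
  rcases le_total x y with hxy | hyx
  · rw [min_eq_left hxy, sub_self, max_eq_right (sub_nonpos.2 (hf hx hy hxy))]
  · rw [min_eq_right hyx, max_eq_left (sub_nonneg.2 (hf hy hx hyx))]

theorem monotoneOn_logb_one_add {b : ℝ} (hb : 1 < b) :
    MonotoneOn (fun x => logb b (1 + x)) (Ici 0) :=
  fun x hx _ _ hxy => logb_le_logb_of_le hb (by linarith [mem_Ici.1 hx]) (by linarith)

section LayerCake

variable {α : Type*} [MeasurableSpace α] {μ : Measure α} [IsFiniteMeasure μ] {f : α → ℝ}

theorem integral_log_one_add_eq_integral_meas_lt (f_nn : 0 ≤ᵐ[μ] f)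
    (f_mble : AEMeasurable f μ) :
    ∫ a, log (1 + f a) ∂μ = ∫ t in Ioi (0 : ℝ), μ.real {a | t < f a} / (1 + t) := by
  have g_intble : ∀ t > (0 : ℝ), IntervalIntegrable (fun s : ℝ => (1 + s)⁻¹) volume 0 t :=
    fun t ht => ContinuousOn.intervalIntegrable <| (continuousOn_const.add continuousOn_id).inv₀
      fun s hs => by
        rw [uIcc_of_le ht.le] at hs
        exact (by linarith [hs.1] : (0 : ℝ) < 1 + s).ne'
  have g_nn : ∀ᵐ t ∂volume.restrict (Ioi (0 : ℝ)), 0 ≤ (1 + t)⁻¹ :=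
    ae_restrict_of_forall_mem measurableSet_Ioi fun t (ht : 0 < t) => by positivity
  have layercake := lintegral_comp_eq_lintegral_meas_lt_mul μ f_nn f_mble g_intble g_nn
  have tail_anti : Antitone fun t : ℝ => μ.real {a | t < f a} :=
    fun _ _ hst => measureReal_mono fun _ h => lt_of_le_of_lt hst h
  have tail_mble : Measurable fun t : ℝ => μ.real {a | t < f a} / (1 + t) :=
    tail_anti.measurable.div (measurable_const.add measurable_id)
  have log_nn : 0 ≤ᵐ[μ] fun a => log (1 + f a) := by
    filter_upwards [f_nn] with a (ha : 0 ≤ f a)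
    exact log_nonneg (by linarith)
  have tail_nn : 0 ≤ᵐ[volume.restrict (Ioi 0)] fun t : ℝ => μ.real {a | t < f a} / (1 + t) :=
    ae_restrict_of_forall_mem measurableSet_Ioi fun t (ht : 0 < t) => by positivity
  rw [integral_eq_lintegral_of_nonneg_ae log_nn (f_mble.const_add 1).log.aestronglyMeasurable,
    integral_eq_lintegral_of_nonneg_ae tail_nn tail_mble.aestronglyMeasurable]
  congr 1
  calc ∫⁻ a, ENNReal.ofReal (log (1 + f a)) ∂μ
      = ∫⁻ a, ENNReal.ofReal (∫ t in 0..f a, (1 + t)⁻¹) ∂μ := by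
        refine lintegral_congr_ae ?_
        filter_upwards [f_nn] with a ha
        rw [integral_inv_one_add ha]
    _ = ∫⁻ t in Ioi 0, μ {a | t < f a} * ENNReal.ofReal (1 + t)⁻¹ := layercake
    _ = ∫⁻ t in Ioi 0, ENNReal.ofReal (μ.real {a | t < f a} / (1 + t)) := by
        refine setLIntegral_congr_fun measurableSet_Ioi fun t _ => ?_
        rw [div_eq_mul_inv, ENNReal.ofReal_mul measureReal_nonneg, ofReal_measureReal]

theorem integral_logb_one_add_eq_integral_meas_lt (b : ℝ) (f_nn : 0 ≤ᵐ[μ] f)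
    (f_mble : AEMeasurable f μ) :
    ∫ a, logb b (1 + f a) ∂μ =
      (1 / log b) * ∫ t in Ioi (0 : ℝ), μ.real {a | t < f a} / (1 + t) := by
  simp only [logb, integral_div, integral_log_one_add_eq_integral_meas_lt f_nn f_mble]
  ring

end LayerCake

section Tails

variable {Ω β : Type*} [MeasurableSpace Ω] {μ : Measure Ω} [LinearOrder β]
  [TopologicalSpace β] [OrderClosedTopology β] [MeasurableSpace β] [OpensMeasurableSpace β]
  {X Y : Ω → β}

theorem ProbabilityTheory.IndepFun.measureReal_lt_min (hXY : IndepFun X Y μ) (t : β) :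
    μ.real {ω | t < min (X ω) (Y ω)} = μ.real {ω | t < X ω} * μ.real {ω | t < Y ω} := by
  have hset : {ω | t < min (X ω) (Y ω)} = X ⁻¹' Ioi t ∩ Y ⁻¹' Ioi t := by
    ext ω; simp
  rw [hset, measureReal_def,
    hXY.measure_inter_preimage_eq_mul _ _ measurableSet_Ioi measurableSet_Ioi, ENNReal.toReal_mul]
  rfl

theorem one_sub_measureReal_le [IsProbabilityMeasure μ] (hX : Measurable X) (t : β) :
    1 - μ.real {ω | X ω ≤ t} = μ.real {ω | t < X ω} := by
  have hcompl : {ω | t < X ω} = {ω | X ω ≤ t}ᶜ := by ext ω; simp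
  rw [hcompl, probReal_compl_eq_one_sub (s := {ω | X ω ≤ t}) (hX measurableSet_Iic)]

end Tails

theorem asc_decomposition_general
    {Ω : Type*} [MeasurableSpace Ω] (μ : Measure Ω) [IsProbabilityMeasure μ]
    (γb γe : Ω → ℝ)
    (hγb : Measurable γb) (hγe : Measurable γe)
    (hγbpos : ∀ ω, 0 ≤ γb ω) (hγepos : ∀ ω, 0 ≤ γe ω)
    (hindep : IndepFun γb γe μ)
    (hintb : Integrable (fun ω => Real.logb 2 (1 + γb ω)) μ) :
    (∫ ω, max (Real.logb 2 (1 + γb ω) - Real.logb 2 (1 + γe ω)) 0 ∂μ =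
      (∫ ω, Real.logb 2 (1 + γb ω) ∂μ) -
        (1 / Real.log 2) * ∫ x in Ioi (0 : ℝ),
          (1 - (μ {ω | γe ω ≤ x}).toReal) * (1 - (μ {ω | γb ω ≤ x}).toReal) /
            (1 + x)) ∧
      0 ≤ (1 / Real.log 2) * ∫ x in Ioi (0 : ℝ),
          (1 - (μ {ω | γe ω ≤ x}).toReal) * (1 - (μ {ω | γb ω ≤ x}).toReal) /
            (1 + x) := by
  set Z : Ω → ℝ := fun ω => min (γb ω) (γe ω)
  have hZ0 (ω : Ω) : 0 ≤ Z ω := le_min (hγbpos ω) (hγepos ω)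
  have tail_min (x : ℝ) :
      (1 - (μ {ω | γe ω ≤ x}).toReal) * (1 - (μ {ω | γb ω ≤ x}).toReal) =
        μ.real {ω | x < Z ω} := by
    rw [← measureReal_def, ← measureReal_def, one_sub_measureReal_le hγe,
      one_sub_measureReal_le hγb, hindep.measureReal_lt_min, mul_comm]
  have logb_le (ω : Ω) : logb 2 (1 + Z ω) ≤ logb 2 (1 + γb ω) :=
    monotoneOn_logb_one_add one_lt_two (hZ0 ω) (hγbpos ω) (min_le_left _ _)
  have hintZ : Integrable (fun ω => logb 2 (1 + Z ω)) μ := by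
    refine hintb.mono' (((hγb.min hγe).const_add 1).log.div_const _).aestronglyMeasurable
      (ae_of_all _ fun ω => ?_)
    rw [norm_of_nonneg (logb_nonneg one_lt_two (by linarith [hZ0 ω]))]
    exact logb_le ω
  have max_eq (ω : Ω) := (monotoneOn_logb_one_add one_lt_two).max_sub_zero_eq_sub_map_min
    (hγbpos ω) (hγepos ω)
  simp only [tail_min]
  refine ⟨?_, ?_⟩
  · rw [integral_congr_ae (ae_of_all _ max_eq), integral_sub hintb hintZ,
      integral_logb_one_add_eq_integral_meas_lt 2 (ae_of_all _ hZ0) (hγb.min hγe).aemeasurable]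
  · exact mul_nonneg (by positivity)
      (setIntegral_nonneg measurableSet_Ioi fun x (hx : 0 < x) => by positivity)

/-- Average secrecy capacity decomposition: for independent nonnegative SNRs with
`γ_e` exponential, `E[max{log₂(1+γ_b) − log₂(1+γ_e), 0}]` equals the average legitimate
capacity minus the nonnegative ASC loss
`L = (1/ln 2) ∫₀^∞ (1−F_e(x))(1−F_b(x))/(1+x) dx`. -/
theorem asc_decomposition
    {Ω : Type*} [MeasurableSpace Ω] (μ : Measure Ω) [IsProbabilityMeasure μ]
    (γb γe : Ω → ℝ) (gebar : ℝ) (hgebar : 0 < gebar)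
    (hγb : Measurable γb) (hγe : Measurable γe)
    (hγbpos : ∀ ω, 0 ≤ γb ω) (hγepos : ∀ ω, 0 ≤ γe ω)
    (hγedist : μ.map γe = expMeasure (1 / gebar))
    (hindep : IndepFun γb γe μ)
    (hintb : Integrable (fun ω => Real.logb 2 (1 + γb ω)) μ)
    (hintL : IntegrableOn
      (fun x => (1 - (μ {ω | γe ω ≤ x}).toReal) * (1 - (μ {ω | γb ω ≤ x}).toReal) /
        (1 + x)) (Ioi 0) volume) :
    (∫ ω, max (Real.logb 2 (1 + γb ω) - Real.logb 2 (1 + γe ω)) 0 ∂μ =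
      (∫ ω, Real.logb 2 (1 + γb ω) ∂μ) -
        (1 / Real.log 2) * ∫ x in Ioi (0 : ℝ),
          (1 - (μ {ω | γe ω ≤ x}).toReal) * (1 - (μ {ω | γb ω ≤ x}).toReal) /
            (1 + x)) ∧
      0 ≤ (1 / Real.log 2) * ∫ x in Ioi (0 : ℝ),
          (1 - (μ {ω | γe ω ≤ x}).toReal) * (1 - (μ {ω | γb ω ≤ x}).toReal) /
            (1 + x) :=
  asc_decomposition_general μ γb γe hγb hγe hγbpos hγepos hindep hintb
end

section
/- With γ_b having MGF M(s) = E[e^{sγ_b}] and γ_e ~ Exponential(mean γ̄_e) independent, the ASC loss satisfies (1/ln 2)∫₀^∞ (1−F_e(x))(1−F_b(x))/(1+x) dx = E[log₂(1+γ_e)] − (e^{1/γ̄_e}/ln 2) ∫₀^1 (1/u) e^{−1/(u γ̄_e)} M(−1/(u γ̄_e)) du, and the correction term G = (e^{1/γ̄_e}/ln 2) ∫₀^1 (1/u) e^{−1/(u γ̄_e)} M(−1/(u γ̄_e)) du is nonnegative. -/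
/-!
Write `r = 1 / γ̄_e`. For `x ≥ 0` the survival function of `γ_e` is `e^{-rx}`, so the loss
integrand is `e^{-rx} (1 - F_b(x)) / (1 + x)`. Without the factor `F_b` this integrates to
`E[log (1 + γ_e)]`: it is the layer-cake formula for `log (1 + y) = ∫₀^y dt / (1 + t)`.
With it, Fubini turns `F_b(x) = P(γ_b ≤ x)` into `E ∫_{γ_b}^∞ e^{-rx} / (1 + x) dx`, and this
inner integral equals `e^r ∫_r^∞ t⁻¹ e^{-t} e^{-t γ_b} dt` (both are `e^r E₁(r (1 + γ_b))`).
A second exchange of `E` and `dt` produces `M(-t)`, and `t = r / u` moves the integral to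
`(0, 1)`.
-/

open MeasureTheory Real Set ProbabilityTheory intervalIntegral

theorem integral_comp_add_right_Ioi {E : Type*} [NormedAddCommGroup E] [NormedSpace ℝ E]
    (g : ℝ → E) (a d : ℝ) :
    ∫ x in Ioi a, g (x + d) = ∫ x in Ioi (a + d), g x := by
  simpa using (measurePreserving_add_right volume d).setIntegral_preimage_emb
    (measurableEmbedding_addRight d) g (Ioi (a + d))

theorem integral_Ioi_inv_smul_comp_mul_right {E : Type*} [NormedAddCommGroup E]
    [NormedSpace ℝ E] (f : ℝ → E) (a : ℝ) {c : ℝ} (hc : 0 < c) :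
    ∫ t in Ioi a, t⁻¹ • f (t * c) = ∫ t in Ioi (a * c), t⁻¹ • f t := by
  rw [← integral_comp_mul_right_Ioi' _ a hc, ← MeasureTheory.integral_smul]
  congr 1 with t
  rw [smul_smul]
  field_simp

theorem integral_Ioo_zero_one_inv_smul_comp_inv {E : Type*} [NormedAddCommGroup E]
    [NormedSpace ℝ E] (f : ℝ → E) :
    ∫ u in Ioo 0 1, u⁻¹ • f u⁻¹ = ∫ t in Ioi 1, t⁻¹ • f t := by
  have himage : Inv.inv '' Ioo (0 : ℝ) 1 = Ioi 1 := by
    rw [image_inv_eq_inv, inv_Ioo_0_left one_pos, inv_one]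
  have hderiv : ∀ u ∈ Ioo (0 : ℝ) 1, HasDerivWithinAt Inv.inv (-(u ^ 2)⁻¹) (Ioo 0 1) u :=
    fun u hu => (hasDerivAt_inv hu.1.ne').hasDerivWithinAt
  rw [← himage,
    integral_image_eq_integral_abs_deriv_smul measurableSet_Ioo hderiv inv_injective.injOn]
  refine setIntegral_congr_fun measurableSet_Ioo fun u hu => ?_
  simp only [smul_smul, abs_neg, abs_inv, abs_pow, abs_of_pos hu.1, inv_inv]
  congr 1
  field_simp [hu.1.ne']

theorem integral_Ioo_zero_one_inv_smul_comp_div {E : Type*} [NormedAddCommGroup E]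
    [NormedSpace ℝ E] (f : ℝ → E) {r : ℝ} (hr : 0 < r) :
    ∫ u in Ioo 0 1, u⁻¹ • f (r / u) = ∫ t in Ioi r, t⁻¹ • f t := by
  simp_rw [div_eq_mul_inv, mul_comm r]
  rw [integral_Ioo_zero_one_inv_smul_comp_inv (fun t => f (t * r)),
    integral_Ioi_inv_smul_comp_mul_right f 1 hr, one_mul]

theorem integrableOn_inv_mul_exp_neg {r : ℝ} (hr : 0 < r) :
    IntegrableOn (fun t => t⁻¹ * exp (-t)) (Ioi r) := by
  refine ((exp_neg_integrableOn_Ioi r one_pos).const_mul r⁻¹).mono' (by fun_prop)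
    ((ae_restrict_iff' measurableSet_Ioi).2 (ae_of_all _ fun t (ht : r < t) => ?_))
  rw [norm_mul, norm_inv, norm_of_nonneg (hr.trans ht).le, norm_of_nonneg (exp_pos _).le,
    neg_one_mul]
  gcongr

theorem integrableOn_exp_neg_mul_div_one_add {r : ℝ} (hr : 0 < r) :
    IntegrableOn (fun x => exp (-(r * x)) / (1 + x)) (Ioi 0) := by
  refine (exp_neg_integrableOn_Ioi 0 hr).mono'
    (by fun_prop : Measurable fun x => exp (-(r * x)) / (1 + x)).aestronglyMeasurable
    ((ae_restrict_iff' measurableSet_Ioi).2 (ae_of_all _ fun x (hx : 0 < x) => ?_))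
  rw [norm_div, norm_of_nonneg (exp_pos _).le, norm_of_nonneg (by linarith), neg_mul]
  exact div_le_self (exp_pos _).le (by linarith)

-- Both sides equal `exp r * ∫ s in Ioi ((y + 1) * r), s⁻¹ * exp (-s)`, by the substitutions
-- `s = (x + 1) * r` on the left and `s = t * (y + 1)` on the right.
theorem integral_Ioi_exp_neg_mul_div_one_add {r y : ℝ} (hr : 0 < r) (hy : -1 < y) :
    ∫ x in Ioi y, exp (-(r * x)) / (1 + x) =
      exp r * ∫ t in Ioi r, t⁻¹ * exp (-t) * exp (-t * y) := by
  have hscale (a c : ℝ) (hc : 0 < c) :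
      ∫ t in Ioi a, t⁻¹ * exp (-(t * c)) = ∫ t in Ioi (a * c), t⁻¹ * exp (-t) := by
    simpa only [smul_eq_mul] using
      integral_Ioi_inv_smul_comp_mul_right (fun t => exp (-t)) a hc
  have hleft (x : ℝ) :
      exp (-(r * x)) / (1 + x) = exp r * ((x + 1)⁻¹ * exp (-((x + 1) * r))) := by
    rw [add_comm x, div_eq_inv_mul, mul_left_comm, ← exp_add]
    ring_nf
  have hright (t : ℝ) : t⁻¹ * exp (-t) * exp (-t * y) = t⁻¹ * exp (-(t * (y + 1))) := by
    rw [mul_assoc, ← exp_add]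
    ring_nf
  simp_rw [hleft, hright]
  rw [MeasureTheory.integral_const_mul,
    integral_comp_add_right_Ioi (fun x => x⁻¹ * exp (-(x * r))), hscale _ _ hr,
    hscale _ _ (by linarith), mul_comm r]

section

variable {Ω : Type*} [MeasurableSpace Ω] {μ : Measure Ω} {X : Ω → ℝ}

theorem one_sub_measureReal_le_eq_measureReal_lt [IsProbabilityMeasure μ] (hX : Measurable X)
    (x : ℝ) :
    1 - μ.real {ω | X ω ≤ x} = μ.real {ω | x < X ω} := by
  rw [← probReal_compl_eq_one_sub (measurableSet_le hX measurable_const)]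
  congr 1 with ω
  simp

theorem measureReal_lt_of_map_eq_expMeasure [IsProbabilityMeasure μ] (hX : Measurable X)
    {r : ℝ} (hr : 0 < r) (hXr : μ.map X = expMeasure r) {x : ℝ} (hx : 0 ≤ x) :
    μ.real {ω | x < X ω} = exp (-(r * x)) := by
  have : IsProbabilityMeasure (expMeasure r) := isProbabilityMeasure_expMeasure hr
  have hcdf := cdf_expMeasure_eq hr x
  rw [if_pos hx, cdf_eq_real, ← hXr, map_measureReal_apply hX measurableSet_Iic] at hcdf
  have hle : μ.real {ω | X ω ≤ x} = 1 - exp (-(r * x)) := hcdf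
  rw [← one_sub_measureReal_le_eq_measureReal_lt hX, hle]
  ring

theorem log_one_add_eq_integral_inv {y : ℝ} (hy : -1 < y) :
    log (1 + y) = ∫ t in 0..y, (1 + t)⁻¹ := by
  rw [intervalIntegral.integral_comp_add_left (fun t => t⁻¹),
    integral_inv_of_pos (by norm_num) (by linarith), add_zero, div_one]

theorem integral_log_one_add_eq_integral_measureReal_lt [IsFiniteMeasure μ] (hX : Measurable X)
    (hX0 : ∀ ω, 0 ≤ X ω) :
    ∫ ω, log (1 + X ω) ∂μ = ∫ x in Ioi 0, μ.real {ω | x < X ω} / (1 + x) := by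
  have hinv_nonneg : ∀ x ∈ Ioi (0 : ℝ), 0 ≤ (1 + x)⁻¹ := fun x (hx : 0 < x) => by positivity
  have htail : Antitone fun x => μ.real {ω | x < X ω} := fun a b hab =>
    measureReal_mono fun ω (h : b < X ω) => hab.trans_lt h
  rw [integral_eq_lintegral_of_nonneg_ae, integral_eq_lintegral_of_nonneg_ae]
  · congr 1
    calc ∫⁻ ω, ENNReal.ofReal (log (1 + X ω)) ∂μ
        = ∫⁻ ω, ENNReal.ofReal (∫ t in 0..X ω, (1 + t)⁻¹) ∂μ := by
          refine lintegral_congr fun ω => ?_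
          rw [log_one_add_eq_integral_inv (by linarith [hX0 ω])]
      _ = ∫⁻ x in Ioi 0, μ {ω | x < X ω} * ENNReal.ofReal (1 + x)⁻¹ := by
          refine lintegral_comp_eq_lintegral_meas_lt_mul μ (ae_of_all _ hX0) hX.aemeasurable
            (fun t ht => ?_) ((ae_restrict_iff' measurableSet_Ioi).2 (ae_of_all _ hinv_nonneg))
          refine (continuousOn_const.add continuousOn_id).inv₀ ?_ |>.intervalIntegrable
          intro x hx
          rw [uIcc_of_le ht.le] at hx
          change 1 + x ≠ 0
          linarith [hx.1]
      _ = ∫⁻ x in Ioi 0, ENNReal.ofReal (μ.real {ω | x < X ω} / (1 + x)) := by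
          refine setLIntegral_congr_fun measurableSet_Ioi fun x hx => ?_
          rw [div_eq_mul_inv, ENNReal.ofReal_mul measureReal_nonneg, ofReal_measureReal]
  · exact (ae_restrict_iff' measurableSet_Ioi).2 (ae_of_all _ fun x hx =>
      mul_nonneg measureReal_nonneg (hinv_nonneg x hx))
  · exact (htail.measurable.div (by fun_prop)).aestronglyMeasurable
  · exact ae_of_all _ fun ω => log_nonneg (by linarith [hX0 ω])
  · exact (hX.const_add 1).log.aestronglyMeasurable

theorem setIntegral_mul_measureReal_le [IsFiniteMeasure μ] (hX : Measurable X) {k : ℝ → ℝ}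
    {s : Set ℝ} (hk : IntegrableOn k s) :
    ∫ x in s, k x * μ.real {ω | X ω ≤ x} = ∫ ω, (∫ x in s ∩ Ici (X ω), k x) ∂μ := by
  set S : Set (ℝ × Ω) := {p | X p.2 ≤ p.1}
  have hS : MeasurableSet S := measurableSet_le (hX.comp measurable_snd) measurable_fst
  have hF : Integrable (S.indicator fun p => k p.1) ((volume.restrict s).prod μ) :=
    (hk.comp_fst μ).indicator hS
  calc ∫ x in s, k x * μ.real {ω | X ω ≤ x}
      = ∫ x in s, ∫ ω, S.indicator (fun p => k p.1) (x, ω) ∂μ := by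
        congr 1 with x
        rw [mul_comm, ← smul_eq_mul,
          ← integral_indicator_const _ (measurableSet_le hX measurable_const)]
        rfl
    _ = ∫ ω, (∫ x in s, (Ici (X ω)).indicator k x) ∂μ := integral_integral_swap hF
    _ = ∫ ω, (∫ x in s ∩ Ici (X ω), k x) ∂μ := by
        simp_rw [setIntegral_indicator measurableSet_Ici]

theorem integral_exp_neg_mul_div_one_add_mul_measureReal_le [IsFiniteMeasure μ]
    (hX : Measurable X) (hX0 : ∀ ω, 0 ≤ X ω) {r : ℝ} (hr : 0 < r) :
    ∫ x in Ioi 0, exp (-(r * x)) / (1 + x) * μ.real {ω | X ω ≤ x} =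
      exp r * ∫ t in Ioi r, t⁻¹ * exp (-t) * mgf X μ (-t) := by
  have hinner (ω : Ω) : ∫ x in Ioi 0 ∩ Ici (X ω), exp (-(r * x)) / (1 + x) =
      exp r * ∫ t in Ioi r, t⁻¹ * exp (-t) * exp (-t * X ω) := by
    have hset : (Ioi 0 ∩ Ici (X ω) : Set ℝ) =ᵐ[volume] Ioi (X ω) := by
      refine ((Filter.EventuallyEq.refl _ (Ioi (0 : ℝ))).inter Ioi_ae_eq_Ici.symm).trans ?_
      rw [Ioi_inter_Ioi, max_eq_right (hX0 ω)]
      rfl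
    rw [setIntegral_congr_set hset,
      integral_Ioi_exp_neg_mul_div_one_add hr (by linarith [hX0 ω])]
  have hint : Integrable (Function.uncurry fun ω t => t⁻¹ * exp (-t) * exp (-t * X ω))
      (μ.prod (volume.restrict (Ioi r))) := by
    refine ((integrableOn_inv_mul_exp_neg hr).comp_snd μ).mono'
      (by fun_prop : Measurable fun p : Ω × ℝ =>
        p.2⁻¹ * exp (-p.2) * exp (-p.2 * X p.1)).aestronglyMeasurable ?_
    filter_upwards [Measure.quasiMeasurePreserving_snd.ae (ae_restrict_mem measurableSet_Ioi)]
      with p (hp : r < p.2)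
    have ht : 0 < p.2 := hr.trans hp
    change ‖p.2⁻¹ * exp (-p.2) * exp (-p.2 * X p.1)‖ ≤ p.2⁻¹ * exp (-p.2)
    rw [norm_of_nonneg (by positivity)]
    refine mul_le_of_le_one_right (by positivity) (exp_le_one_iff.2 ?_)
    nlinarith [hX0 p.1]
  rw [setIntegral_mul_measureReal_le hX (integrableOn_exp_neg_mul_div_one_add hr)]
  simp_rw [hinner]
  rw [MeasureTheory.integral_const_mul, integral_integral_swap hint]
  congr 2 with t
  rw [MeasureTheory.integral_const_mul]
  rfl

theorem integral_exp_neg_mul_mul_survival_div_one_add [IsFiniteMeasure μ] (hX : Measurable X)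
    (hX0 : ∀ ω, 0 ≤ X ω) {r : ℝ} (hr : 0 < r) :
    ∫ x in Ioi 0, exp (-(r * x)) * (1 - μ.real {ω | X ω ≤ x}) / (1 + x) =
      (∫ x in Ioi 0, exp (-(r * x)) / (1 + x)) -
        exp r * ∫ t in Ioi r, t⁻¹ * exp (-t) * mgf X μ (-t) := by
  have hcdf : Monotone fun x => μ.real {ω | X ω ≤ x} := fun a b hab =>
    measureReal_mono fun ω (h : X ω ≤ a) => h.trans hab
  have hint := (integrableOn_exp_neg_mul_div_one_add hr).mul_bdd
    hcdf.measurable.aestronglyMeasurable (c := μ.real univ)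
    (ae_of_all _ fun x => by
      rw [norm_of_nonneg measureReal_nonneg]
      exact measureReal_mono (subset_univ _))
  rw [← integral_exp_neg_mul_div_one_add_mul_measureReal_le hX hX0 hr,
    ← integral_sub (integrableOn_exp_neg_mul_div_one_add hr) hint]
  congr 1 with x
  ring

end

theorem asc_loss_mgf_form_general
    {Ω : Type*} [MeasurableSpace Ω] (μ : Measure Ω) [IsProbabilityMeasure μ]
    (γb γe : Ω → ℝ) (gebar : ℝ) (hgebar : 0 < gebar)
    (hγb : Measurable γb) (hγe : Measurable γe)
    (hγbpos : ∀ ω, 0 ≤ γb ω) (hγepos : ∀ ω, 0 ≤ γe ω)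
    (hγedist : μ.map γe = expMeasure (1 / gebar))
    (M : ℝ → ℝ) (hM : M = fun s => ∫ ω, Real.exp (s * γb ω) ∂μ) :
    ((1 / Real.log 2) * ∫ x in Ioi (0 : ℝ),
        (1 - (μ {ω | γe ω ≤ x}).toReal) * (1 - (μ {ω | γb ω ≤ x}).toReal) / (1 + x) =
      (∫ ω, Real.logb 2 (1 + γe ω) ∂μ) -
        Real.exp (1 / gebar) / Real.log 2 *
          ∫ u in (0 : ℝ)..1, (1 / u) * Real.exp (-1 / (u * gebar)) *
            M (-1 / (u * gebar))) ∧
      0 ≤ Real.exp (1 / gebar) / Real.log 2 *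
          ∫ u in (0 : ℝ)..1, (1 / u) * Real.exp (-1 / (u * gebar)) *
            M (-1 / (u * gebar)) := by
  obtain rfl : M = mgf γb μ := hM
  have hr : 0 < 1 / gebar := by positivity
  have hsurv (x : ℝ) (hx : 0 ≤ x) : 1 - μ.real {ω | γe ω ≤ x} = exp (-(1 / gebar * x)) := by
    rw [one_sub_measureReal_le_eq_measureReal_lt hγe,
      measureReal_lt_of_map_eq_expMeasure hγe hr hγedist hx]
  have hG : ∫ u in (0 : ℝ)..1, (1 / u) * exp (-1 / (u * gebar)) *
      mgf γb μ (-1 / (u * gebar)) = ∫ t in Ioi (1 / gebar), t⁻¹ * exp (-t) * mgf γb μ (-t) := by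
    have := integral_Ioo_zero_one_inv_smul_comp_div (fun t => exp (-t) * mgf γb μ (-t)) hr
    simp only [smul_eq_mul, ← mul_assoc] at this
    rw [intervalIntegral.integral_of_le zero_le_one, integral_Ioc_eq_integral_Ioo, ← this]
    congr 1 with u
    rw [one_div u, show -1 / (u * gebar) = -(1 / gebar / u) by ring]
  have hE : ∫ ω, logb 2 (1 + γe ω) ∂μ =
      (∫ x in Ioi 0, exp (-(1 / gebar * x)) / (1 + x)) / log 2 := by
    simp_rw [logb]
    rw [MeasureTheory.integral_div, integral_log_one_add_eq_integral_measureReal_lt hγe hγepos]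
    refine congrArg (· / log 2) (setIntegral_congr_fun measurableSet_Ioi fun x (hx : 0 < x) => ?_)
    rw [measureReal_lt_of_map_eq_expMeasure hγe hr hγedist hx.le]
  have hL : ∫ x in Ioi 0,
      (1 - (μ {ω | γe ω ≤ x}).toReal) * (1 - (μ {ω | γb ω ≤ x}).toReal) / (1 + x) =
      ∫ x in Ioi 0, exp (-(1 / gebar * x)) * (1 - μ.real {ω | γb ω ≤ x}) / (1 + x) :=
    setIntegral_congr_fun measurableSet_Ioi fun x (hx : 0 < x) => by
      rw [← measureReal_def, ← measureReal_def, hsurv x hx.le]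
  refine ⟨?_, ?_⟩
  · rw [hL, integral_exp_neg_mul_mul_survival_div_one_add hγb hγbpos hr, hE, hG]
    ring
  · rw [hG]
    refine mul_nonneg (div_nonneg (exp_pos _).le (log_pos one_lt_two).le)
      (setIntegral_nonneg measurableSet_Ioi fun t (ht : 1 / gebar < t) => ?_)
    have : 0 < t := hr.trans ht
    exact mul_nonneg (by positivity) mgf_nonneg

/-- MGF form of the ASC loss: with `M(s) = E[e^{sγ_b}]` and `γ_e` exponential with mean
`γ̄_e`, the ASC loss equals `E[log₂(1+γ_e)] − G`, where
`G = (e^{1/γ̄_e}/ln 2) ∫₀¹ (1/u) e^{−1/(uγ̄_e)} M(−1/(uγ̄_e)) du ≥ 0`. -/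
theorem asc_loss_mgf_form
    {Ω : Type*} [MeasurableSpace Ω] (μ : Measure Ω) [IsProbabilityMeasure μ]
    (γb γe : Ω → ℝ) (gebar : ℝ) (hgebar : 0 < gebar)
    (hγb : Measurable γb) (hγe : Measurable γe)
    (hγbpos : ∀ ω, 0 ≤ γb ω) (hγepos : ∀ ω, 0 ≤ γe ω)
    (hγedist : μ.map γe = expMeasure (1 / gebar))
    (hindep : IndepFun γb γe μ)
    (M : ℝ → ℝ) (hM : M = fun s => ∫ ω, Real.exp (s * γb ω) ∂μ)
    (hinte : Integrable (fun ω => Real.logb 2 (1 + γe ω)) μ)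
    (hintL : IntegrableOn
      (fun x => (1 - (μ {ω | γe ω ≤ x}).toReal) * (1 - (μ {ω | γb ω ≤ x}).toReal) /
        (1 + x)) (Ioi 0) volume) :
    ((1 / Real.log 2) * ∫ x in Ioi (0 : ℝ),
        (1 - (μ {ω | γe ω ≤ x}).toReal) * (1 - (μ {ω | γb ω ≤ x}).toReal) / (1 + x) =
      (∫ ω, Real.logb 2 (1 + γe ω) ∂μ) -
        Real.exp (1 / gebar) / Real.log 2 *
          ∫ u in (0 : ℝ)..1, (1 / u) * Real.exp (-1 / (u * gebar)) *
            M (-1 / (u * gebar))) ∧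
      0 ≤ Real.exp (1 / gebar) / Real.log 2 *
          ∫ u in (0 : ℝ)..1, (1 / u) * Real.exp (-1 / (u * gebar)) *
            M (-1 / (u * gebar)) :=
  asc_loss_mgf_form_general μ γb γe gebar hgebar hγb hγe hγbpos hγepos hγedist M hM
end

section
/- Let γ_b = c X² where X ~ N(μ, σ²) with μ > 0 (folded-normal magnitude, squared) and γ_e ~ Exponential(mean γ̄_e), independent, τ > 1. As γ̄_b = c(μ² + σ²) → ∞ with K = μ²/σ² fixed, the secrecy outage probability decays proportionally to γ̄_b^{−1/2}; specifically P ~ e^{−K/2 + (τ−1)/(τγ̄_e)} sqrt(τ γ̄_e (1+K)/(2γ̄_b)) · Γ̃(3/2, (τ−1)/(τγ̄_e)), so the secrecy diversity order is 1/2. -/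
open MeasureTheory Real Set Filter

/-- Standard Gaussian CDF. -/
noncomputable def gaussCDF (x : ℝ) : ℝ :=
  ∫ t in Iic x, (1 / Real.sqrt (2 * π)) * Real.exp (-t ^ 2 / 2)

/-!
After standardising, `F_g(y) = Φ(-√K + √((1+K)y/g)) - Φ(-√K - √((1+K)y/g))`, so the
symmetric derivative of `Φ` at `-√K` gives `√g · F_g(y) → 2 √((1+K)y) φ(-√K)`, while the
bound `Φ' ≤ 1/√(2π)` dominates `√g · F_g(y)` by a multiple of `√y`. Dominated convergence
then yields `√g · P(g) → 2 √(1+K) φ(-√K) ∫₀^∞ √(τx+τ-1) e^{-x/γ̄_e}/γ̄_e dx`, and the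
substitution `t = x/γ̄_e + (τ-1)/(τγ̄_e)` turns this integral into
`√(τγ̄_e) e^{(τ-1)/(τγ̄_e)} Γ(3/2) Γ̃(3/2, (τ-1)/(τγ̄_e))`, so the limit is exactly `√g · A(g)`.
-/

open scoped Topology

noncomputable def gaussPDF (x : ℝ) : ℝ := 1 / √(2 * π) * exp (-x ^ 2 / 2)

lemma gaussPDF_pos (x : ℝ) : 0 < gaussPDF x := by
  unfold gaussPDF; positivity

lemma gaussPDF_le (x : ℝ) : gaussPDF x ≤ 1 / √(2 * π) :=
  mul_le_of_le_one_right (by positivity) (exp_le_one_iff.2 (by nlinarith [sq_nonneg x]))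

lemma continuous_gaussPDF : Continuous gaussPDF := by
  unfold gaussPDF; fun_prop

lemma integrable_gaussPDF : Integrable gaussPDF := by
  convert (integrable_exp_neg_mul_sq (b := 1 / 2) (by norm_num)).const_mul (1 / √(2 * π))
    using 2 with x
  simp only [gaussPDF]; ring_nf

lemma gaussCDF_sub_gaussCDF (a b : ℝ) : gaussCDF b - gaussCDF a = ∫ t in a..b, gaussPDF t :=
  intervalIntegral.integral_Iic_sub_Iic integrable_gaussPDF.integrableOn
    integrable_gaussPDF.integrableOn

lemma hasDerivAt_gaussCDF (x : ℝ) : HasDerivAt gaussCDF (gaussPDF x) x := by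
  have h : gaussCDF = fun y => gaussCDF 0 + ∫ t in (0 : ℝ)..y, gaussPDF t :=
    funext fun y => by rw [← gaussCDF_sub_gaussCDF]; ring
  rw [h]
  exact (intervalIntegral.integral_hasDerivAt_right integrable_gaussPDF.intervalIntegrable
    (continuous_gaussPDF.stronglyMeasurableAtFilter _ _)
    continuous_gaussPDF.continuousAt).const_add _

@[fun_prop]
lemma continuous_gaussCDF : Continuous gaussCDF :=
  continuous_iff_continuousAt.2 fun x => (hasDerivAt_gaussCDF x).continuousAt

lemma monotone_gaussCDF : Monotone gaussCDF := fun a b hab => by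
  rw [← sub_nonneg, gaussCDF_sub_gaussCDF]
  exact intervalIntegral.integral_nonneg hab fun t _ => (gaussPDF_pos t).le

lemma gaussCDF_sub_le {a b : ℝ} (hab : a ≤ b) : gaussCDF b - gaussCDF a ≤ (b - a) / √(2 * π) := by
  rw [gaussCDF_sub_gaussCDF]
  calc ∫ t in a..b, gaussPDF t ≤ ∫ _ in a..b, 1 / √(2 * π) :=
        intervalIntegral.integral_mono_on hab integrable_gaussPDF.intervalIntegrable
          intervalIntegrable_const fun t _ => gaussPDF_le t
    _ = (b - a) / √(2 * π) := by simp [div_eq_mul_inv]; ring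

theorem HasDerivAt.tendsto_mul_symmDiff_atTop {f : ℝ → ℝ} {f' a : ℝ} (hf : HasDerivAt f f' a)
    (d : ℝ) : Tendsto (fun t => t * (f (a + d / t) - f (a - d / t))) atTop (𝓝 (2 * d * f')) := by
  set D := fun s => f (a + d * s) - f (a - d * s)
  have hD : HasDerivAt D (2 * d * f') 0 := by
    have hplus := hf.comp_of_eq 0 (((hasDerivAt_id (0 : ℝ)).const_mul d).const_add a) (by simp)
    have hminus := hf.comp_of_eq 0 (((hasDerivAt_id (0 : ℝ)).const_mul d).const_sub a) (by simp)
    exact (hplus.sub hminus).congr_deriv (by ring)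
  have hslope := (hasDerivAt_iff_tendsto_slope.1 hD).comp
    (tendsto_inv_atTop_nhdsGT_zero.mono_right (nhdsGT_le_nhdsNE 0))
  refine hslope.congr' ((eventually_gt_atTop 0).mono fun t ht => ?_)
  simp [D, slope_def_field, div_eq_mul_inv, mul_comm]

/-- `Pr[c X² ≤ y]` for `X ~ N(μ, σ²)`, parametrised by `K = μ²/σ²` and the mean `g = c(μ² + σ²)`
of `c X²`, so that `σ = √(g/(c(1+K)))` and `μ = √(Kg/(c(1+K)))`. -/
noncomputable def foldedNormalSqCDF (c K g y : ℝ) : ℝ :=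
  gaussCDF ((√(y / c) - √(K * g / (c * (1 + K)))) / √(g / (c * (1 + K)))) -
    gaussCDF ((-√(y / c) - √(K * g / (c * (1 + K)))) / √(g / (c * (1 + K))))

section FoldedNormal

variable {c K g : ℝ}

lemma foldedNormalSqCDF_eq (hc : 0 < c) (hK : 0 ≤ K) (hg : 0 < g) (y : ℝ) :
    foldedNormalSqCDF c K g y =
      gaussCDF (-√K + √((1 + K) * y) / √g) - gaussCDF (-√K - √((1 + K) * y) / √g) := by
  have hσ : 0 < √(g / (c * (1 + K))) := sqrt_pos.2 (by positivity)
  have hμ : √(K * g / (c * (1 + K))) = √K * √(g / (c * (1 + K))) := by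
    rw [mul_div_assoc, sqrt_mul hK]
  have hy : √(y / c) / √(g / (c * (1 + K))) = √((1 + K) * y) / √g := by
    rw [← sqrt_div' _ (by positivity), ← sqrt_div' _ hg.le]
    congr 1
    field_simp
  rw [foldedNormalSqCDF, sub_div, sub_div, neg_div, hμ, mul_div_cancel_right₀ _ hσ.ne', hy]
  ring_nf

lemma continuous_foldedNormalSqCDF (c K g : ℝ) : Continuous (foldedNormalSqCDF c K g) := by
  unfold foldedNormalSqCDF; fun_prop

lemma abs_sqrt_mul_foldedNormalSqCDF_le (hc : 0 < c) (hK : 0 ≤ K) (hg : 0 < g) (y : ℝ) :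
    |√g * foldedNormalSqCDF c K g y| ≤ 2 * √((1 + K) * y) / √(2 * π) := by
  set u := √((1 + K) * y) / √g
  have hu : √g * u = √((1 + K) * y) := mul_div_cancel₀ _ (sqrt_pos.2 hg).ne'
  have horder : -√K - u ≤ -√K + u := by linarith [show 0 ≤ u by positivity]
  rw [foldedNormalSqCDF_eq hc hK hg, abs_of_nonneg (mul_nonneg (sqrt_nonneg g)
    (sub_nonneg.2 (monotone_gaussCDF horder)))]
  calc √g * (gaussCDF (-√K + u) - gaussCDF (-√K - u))
      ≤ √g * ((-√K + u - (-√K - u)) / √(2 * π)) := by gcongr; exact gaussCDF_sub_le horder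
    _ = 2 * √((1 + K) * y) / √(2 * π) := by rw [← hu]; ring

lemma tendsto_sqrt_mul_foldedNormalSqCDF (hc : 0 < c) (hK : 0 ≤ K) (y : ℝ) :
    Tendsto (fun g => √g * foldedNormalSqCDF c K g y) atTop
      (𝓝 (2 * √((1 + K) * y) * gaussPDF (-√K))) :=
  (((hasDerivAt_gaussCDF _).tendsto_mul_symmDiff_atTop _).comp tendsto_sqrt_atTop).congr'
    ((eventually_gt_atTop 0).mono fun g hg => by
      simp only [Function.comp_apply, foldedNormalSqCDF_eq hc hK hg, sub_eq_add_neg])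

theorem tendsto_integral_sqrt_mul_foldedNormalSqCDF {α : Type*} [MeasurableSpace α]
    {μ : Measure α} {Y w : α → ℝ} (hc : 0 < c) (hK : 0 ≤ K) (hY : AEStronglyMeasurable Y μ)
    (hw : AEStronglyMeasurable w μ) (hint : Integrable (fun x => √(Y x) * w x) μ) :
    Tendsto (fun g => ∫ x, √g * foldedNormalSqCDF c K g (Y x) * w x ∂μ) atTop
      (𝓝 (2 * √(1 + K) * gaussPDF (-√K) * ∫ x, √(Y x) * w x ∂μ)) := by
  rw [← integral_const_mul]
  refine tendsto_integral_filter_of_dominated_convergence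
    (fun x => 2 * √(1 + K) / √(2 * π) * ‖√(Y x) * w x‖) ?_ ?_ (hint.norm.const_mul _) ?_
  · exact .of_forall fun g => (((continuous_foldedNormalSqCDF c K g).comp_aestronglyMeasurable
      hY).const_mul _).mul hw
  · filter_upwards [eventually_gt_atTop 0] with g hg
    refine .of_forall fun x => ?_
    calc ‖√g * foldedNormalSqCDF c K g (Y x) * w x‖
        = |√g * foldedNormalSqCDF c K g (Y x)| * |w x| := by rw [norm_mul, norm_eq_abs, norm_eq_abs]
      _ ≤ 2 * √((1 + K) * Y x) / √(2 * π) * |w x| := by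
          gcongr; exact abs_sqrt_mul_foldedNormalSqCDF_le hc hK hg _
      _ = 2 * √(1 + K) / √(2 * π) * ‖√(Y x) * w x‖ := by
          rw [norm_mul, norm_of_nonneg (sqrt_nonneg _), norm_eq_abs, sqrt_mul (by linarith)]; ring
  · refine .of_forall fun x => ?_
    convert (tendsto_sqrt_mul_foldedNormalSqCDF hc hK (Y x)).mul_const (w x) using 2
    rw [sqrt_mul (by linarith)]; ring

end FoldedNormal

section AffineSubstitution

variable {E : Type*} [NormedAddCommGroup E] [NormedSpace ℝ E] {b : ℝ}

lemma image_mul_add_Ioi (hb : 0 < b) (a d : ℝ) :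
    (fun x => b * x + d) '' Ioi a = Ioi (b * a + d) := by
  rw [← image_add_const_Ioi, ← image_mul_left_Ioi hb, image_image]

lemma hasDerivWithinAt_mul_add (b d : ℝ) (s : Set ℝ) (x : ℝ) :
    HasDerivWithinAt (fun x => b * x + d) b s x := by
  simpa using ((hasDerivAt_id x).const_mul b).add_const d |>.hasDerivWithinAt

lemma integral_comp_mul_add_Ioi (g : ℝ → E) (a d : ℝ) (hb : 0 < b) :
    ∫ x in Ioi a, g (b * x + d) = b⁻¹ • ∫ x in Ioi (b * a + d), g x := by
  rw [← image_mul_add_Ioi hb, integral_image_eq_integral_abs_deriv_smul measurableSet_Ioi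
    (fun x _ => hasDerivWithinAt_mul_add b d _ x)
    (fun x _ y _ h => mul_left_cancel₀ hb.ne' (add_right_cancel h)), integral_smul,
    abs_of_pos hb, inv_smul_smul₀ hb.ne']

lemma integrableOn_Ioi_comp_mul_add_iff (g : ℝ → E) (a d : ℝ) (hb : 0 < b) :
    IntegrableOn (fun x => g (b * x + d)) (Ioi a) ↔ IntegrableOn g (Ioi (b * a + d)) := by
  rw [← image_mul_add_Ioi hb, integrableOn_image_iff_integrableOn_abs_deriv_smul measurableSet_Ioi
    (fun x _ => hasDerivWithinAt_mul_add b d _ x)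
    (fun x _ y _ h => mul_left_cancel₀ hb.ne' (add_right_cancel h)), abs_of_pos hb]
  exact (integrable_fun_smul_iff hb.ne' _).symm

end AffineSubstitution

section IncompleteGamma

lemma integrableOn_sqrt_mul_exp_neg_Ioi {x : ℝ} (hx : 0 ≤ x) :
    IntegrableOn (fun t => √t * exp (-t)) (Ioi x) := by
  refine ((GammaIntegral_convergent (s := 3 / 2) (by norm_num)).mono_set
    (Ioi_subset_Ioi hx)).congr_fun (fun t _ => ?_) measurableSet_Ioi
  rw [sqrt_eq_rpow, mul_comm]; norm_num

lemma integral_Ioi_sqrt_mul_exp_neg (x : ℝ) :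
    ∫ t in Ioi x, √t * exp (-t) = √π / 2 * regUpperIncGamma (3 / 2) x := by
  have hΓ : Gamma (3 / 2) = √π / 2 := by
    rw [show (3 : ℝ) / 2 = 1 / 2 + 1 by norm_num, Gamma_add_one (by norm_num), Gamma_one_half_eq]
    ring
  rw [regUpperIncGamma, hΓ, mul_div_cancel₀ _ (by positivity)]
  refine setIntegral_congr_fun measurableSet_Ioi fun t _ => ?_
  rw [sqrt_eq_rpow]; norm_num

lemma regUpperIncGamma_pos {s x : ℝ} (hs : 0 < s) (hx : 0 ≤ x) : 0 < regUpperIncGamma s x := by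
  refine div_pos ?_ (Gamma_pos_of_pos hs)
  have hpos : ∀ t ∈ Ioi x, 0 < t ^ (s - 1) * exp (-t) := fun t ht =>
    mul_pos (rpow_pos_of_pos (hx.trans_lt ht) _) (exp_pos _)
  rw [setIntegral_pos_iff_support_of_nonneg_ae
    ((ae_restrict_mem measurableSet_Ioi).mono fun t ht => (hpos t ht).le)
    (((GammaIntegral_convergent hs).mono_set (Ioi_subset_Ioi hx)).congr_fun
      (fun t _ => mul_comm _ _) measurableSet_Ioi)]
  exact (by simp : 0 < volume (Ioi x)).trans_le (measure_mono fun t ht => ⟨(hpos t ht).ne', ht⟩)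

end IncompleteGamma

section ExponentialWeight

variable {p γ : ℝ}

lemma sqrt_mul_add_mul_exp_eq (hp : 0 < p) (hγ : 0 < γ) (q x : ℝ) :
    √(p * x + q) * (1 / γ * exp (-x / γ)) = √(p * γ) * exp (q / (p * γ)) / γ *
      (√(γ⁻¹ * x + q / (p * γ)) * exp (-(γ⁻¹ * x + q / (p * γ)))) := by
  have hlin : p * x + q = p * γ * (γ⁻¹ * x + q / (p * γ)) := by field_simp
  rw [hlin, sqrt_mul (by positivity), neg_add, exp_add, exp_neg (q / (p * γ))]
  field_simp

lemma integral_sqrt_mul_add_mul_exp (hp : 0 < p) (hγ : 0 < γ) (q : ℝ) :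
    ∫ x in Ioi 0, √(p * x + q) * (1 / γ * exp (-x / γ)) =
      √(p * γ) * exp (q / (p * γ)) * ∫ t in Ioi (q / (p * γ)), √t * exp (-t) := by
  simp_rw [sqrt_mul_add_mul_exp_eq hp hγ q, integral_const_mul,
    integral_comp_mul_add_Ioi (fun t => √t * exp (-t)) 0 _ (inv_pos.2 hγ), mul_zero, zero_add,
    smul_eq_mul, inv_inv]
  field_simp

lemma integrableOn_sqrt_mul_add_mul_exp (hp : 0 < p) (hγ : 0 < γ) {q : ℝ} (hq : 0 ≤ q) :
    IntegrableOn (fun x => √(p * x + q) * (1 / γ * exp (-x / γ))) (Ioi 0) := by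
  simp_rw [sqrt_mul_add_mul_exp_eq hp hγ q]
  refine Integrable.const_mul
    ((integrableOn_Ioi_comp_mul_add_iff (fun t => √t * exp (-t)) 0 _ (inv_pos.2 hγ)).2 ?_) _
  rw [mul_zero, zero_add]
  exact integrableOn_sqrt_mul_exp_neg_Ioi (by positivity)

end ExponentialWeight

/-- Asymptotic SOP for a folded-normal legitimate link (`γ_b = cX²`, `X ~ N(μ,σ²)`, with
`K = μ²/σ²` fixed and `γ̄_b = c(μ²+σ²) → ∞`) and an exponential eavesdropper link:
the SOP is asymptotically `e^{−K/2+(τ−1)/(τγ̄_e)} √(τγ̄_e(1+K)/(2γ̄_b)) Γ̃(3/2, (τ−1)/(τγ̄_e))`,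
hence decays as `γ̄_b^{−1/2}` (secrecy diversity order `1/2`). -/
theorem sop_folded_normal_asymptotic
    (c K gebar τ : ℝ) (hc : 0 < c) (hK : 0 < K) (hgebar : 0 < gebar) (hτ : 1 < τ)
    (F : ℝ → ℝ → ℝ)
    (hF : F = fun g y =>
      gaussCDF ((Real.sqrt (y / c) - Real.sqrt (K * g / (c * (1 + K)))) /
          Real.sqrt (g / (c * (1 + K)))) -
        gaussCDF ((-Real.sqrt (y / c) - Real.sqrt (K * g / (c * (1 + K)))) /
          Real.sqrt (g / (c * (1 + K)))))
    (P : ℝ → ℝ)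
    (hP : P = fun g => ∫ x in Ioi (0 : ℝ),
      F g (τ * x + τ - 1) * ((1 / gebar) * Real.exp (-x / gebar)))
    (A : ℝ → ℝ)
    (hA : A = fun g => Real.exp (-K / 2 + (τ - 1) / (τ * gebar)) *
      Real.sqrt (τ * gebar * (1 + K) / (2 * g)) *
        regUpperIncGamma (3 / 2) ((τ - 1) / (τ * gebar))) :
    Tendsto (fun g => P g / A g) atTop (nhds 1) := by
  obtain rfl : F = foldedNormalSqCDF c K := hF
  subst hP hA
  set a := (τ - 1) / (τ * gebar)
  have hτ₀ : 0 < τ := by linarith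
  have hweight : ∫ x in Ioi 0, √(τ * x + τ - 1) * (1 / gebar * exp (-x / gebar)) =
      √(τ * gebar) * exp a * (√π / 2 * regUpperIncGamma (3 / 2) a) := by
    simpa only [add_sub_assoc, integral_Ioi_sqrt_mul_exp_neg] using
      integral_sqrt_mul_add_mul_exp hτ₀ hgebar (τ - 1)
  have hlim := tendsto_integral_sqrt_mul_foldedNormalSqCDF (μ := volume.restrict (Ioi 0))
    (Y := fun x => τ * x + τ - 1) (w := fun x => 1 / gebar * exp (-x / gebar)) hc hK.le
    (by fun_prop) (by fun_prop)
    (by simpa only [add_sub_assoc] using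
      (integrableOn_sqrt_mul_add_mul_exp hτ₀ hgebar (sub_nonneg.2 hτ.le)).integrable)
  rw [hweight] at hlim
  set L := 2 * √(1 + K) * gaussPDF (-√K) *
    (√(τ * gebar) * exp a * (√π / 2 * regUpperIncGamma (3 / 2) a))
  have hΓ : 0 < regUpperIncGamma (3 / 2) a :=
    regUpperIncGamma_pos (by norm_num) (div_nonneg (by linarith) (by positivity))
  have hL : 0 < L := by have := gaussPDF_pos (-√K); positivity
  have hsqrtA : ∀ g > 0, √g * (exp (-K / 2 + a) * √(τ * gebar * (1 + K) / (2 * g)) *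
      regUpperIncGamma (3 / 2) a) = L := by
    intro g hg
    simp only [L, gaussPDF, neg_sq, sq_sqrt hK.le, exp_add]
    rw [sqrt_div' _ (by positivity),
      sqrt_mul (by positivity) (1 + K), sqrt_mul zero_le_two, sqrt_mul zero_le_two]
    field_simp
  refine (div_self hL.ne' ▸ hlim.div_const L).congr' ?_
  filter_upwards [eventually_gt_atTop 0] with g hg
  rw [← hsqrtA g hg, eq_comm, ← mul_div_mul_left _ _ (sqrt_pos.2 hg).ne', ← integral_const_mul]
  simp_rw [mul_assoc]
end
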